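/- arXiv:0807.0212 — 5 statements merged into one kernel-verified Lean document; each statement's English description precedes it below -/
import Mathlib

section
/- (Teleportation identity) For every vector ψ ∈ ℂ² and every μ ∈ {0,1,2,3}, the following identity holds in ℂ²⊗ℂ²⊗ℂ²: 2·(ψ ⊗ β_μ) = Σ_{ν=0}^{3} β_ν ⊗ (σ_μᵗ σ_ν ψ). -/
open Matrix
open scoped Kronecker

/-- The four Pauli matrices (paper's convention, with `σ₃` the antisymmetric one). -/
noncomputable def pauli : Fin 4 → Matrix (Fin 2) (Fin 2) ℂ :=
  ![!![1, 0; 0, 1], !![1, 0; 0, -1], !![0, 1; 1, 0], !![0, -Complex.I; Complex.I, 0]]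

/-- The Bell vectors `β_μ = (1/√2) Σ_{a,b} (σ_μ)_{ab} e_a ⊗ e_b` in `ℂ²⊗ℂ² ≃ ℂ^{2×2}`. -/
noncomputable def bell (μ : Fin 4) : Fin 2 × Fin 2 → ℂ :=
  fun p => (1 / (Real.sqrt 2 : ℂ)) * pauli μ p.1 p.2

/-- The teleportation identity: `2 (ψ ⊗ β_μ) = Σ_ν β_ν ⊗ (σ_μᵗ σ_ν ψ)` in `ℂ²⊗ℂ²⊗ℂ²`,
where the space is indexed by triples `(a, b, c)`, the left `ψ` sits in the first factor
and `β_μ` in the last two, while on the right `β_ν` sits in the first two factors. -/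
theorem teleportation_identity (ψ : Fin 2 → ℂ) (μ : Fin 4) :
    (2 : ℂ) • (fun p : Fin 2 × Fin 2 × Fin 2 => ψ p.1 * bell μ p.2) =
      ∑ ν : Fin 4, (fun p : Fin 2 × Fin 2 × Fin 2 =>
        bell ν (p.1, p.2.1) * ((pauli μ)ᵀ * pauli ν).mulVec ψ p.2.2) := by
  funext p
  obtain ⟨a, b, c⟩ := p
  simp only [Pi.smul_apply, Finset.sum_apply, smul_eq_mul, bell, pauli,
    Fin.sum_univ_four, Matrix.mul_apply, Matrix.mulVec, Matrix.transpose_apply,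
    dotProduct, Fin.sum_univ_two]
  fin_cases μ <;> fin_cases a <;> fin_cases b <;> fin_cases c <;>
    simp [Matrix.cons_val_zero, Matrix.cons_val_one] <;> ring_nf <;>
    simp [Complex.I_sq] <;> ring
end

section
/- Let W be a nonzero Hermitian 4×4 complex matrix acting on ℂ²⊗ℂ² such that ⟨φ⊗ψ, W(φ⊗ψ)⟩ ≥ 0 for all φ, ψ ∈ ℂ² (i.e. W is a potential entanglement witness). Then Tr W is real and strictly positive. -/
open Matrix
open scoped Kronecker ComplexOrder

/-- The tensor (Kronecker) product of two vectors in `ℂ²`. -/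
def tensorVec (φ ψ : Fin 2 → ℂ) : Fin 2 × Fin 2 → ℂ := fun p => φ p.1 * ψ p.2

local notation "c*" => starRingEnd ℂ

lemma aux_zero (a : ℂ) (h : ∀ t : ℂ, 0 ≤ t * a + c* t * c* a) : a = 0 := by
  have h1 := h (-(c* a))
  rw [map_neg, Complex.conj_conj] at h1
  have h2 : -(c* a) * a + -a * c* a = -2 * (Complex.normSq a : ℂ) := by
    rw [← Complex.mul_conj]; ring
  rw [h2] at h1
  rw [Complex.le_def] at h1
  have hn := Complex.normSq_nonneg a
  have : Complex.normSq a = 0 := by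
    simp at h1
    nlinarith [h1]
  exact Complex.normSq_eq_zero.mp this

lemma expand (W : Matrix (Fin 2 × Fin 2) (Fin 2 × Fin 2) ℂ) (a b d e : ℂ) :
    star (tensorVec ![a,b] ![d,e]) ⬝ᵥ W.mulVec (tensorVec ![a,b] ![d,e]) =
      c* (a*d) * (W (0,0) (0,0) * (a*d) + W (0,0) (0,1) * (a*e) + W (0,0) (1,0) * (b*d) + W (0,0) (1,1) * (b*e)) +
      c* (a*e) * (W (0,1) (0,0) * (a*d) + W (0,1) (0,1) * (a*e) + W (0,1) (1,0) * (b*d) + W (0,1) (1,1) * (b*e)) +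
      c* (b*d) * (W (1,0) (0,0) * (a*d) + W (1,0) (0,1) * (a*e) + W (1,0) (1,0) * (b*d) + W (1,0) (1,1) * (b*e)) +
      c* (b*e) * (W (1,1) (0,0) * (a*d) + W (1,1) (0,1) * (a*e) + W (1,1) (1,0) * (b*d) + W (1,1) (1,1) * (b*e)) := by
  simp only [tensorVec, dotProduct, mulVec, Fintype.sum_prod_type, Fin.sum_univ_two,
    Matrix.cons_val_zero, Matrix.cons_val_one, Matrix.head_cons, Pi.star_apply, star_mul',
    RingHom.id_apply, Complex.star_def, _root_.map_mul]
  ring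

lemma sum4_zero (a b c d : ℂ) (ha : 0 ≤ a) (hb : 0 ≤ b) (hc : 0 ≤ c) (hd : 0 ≤ d)
    (h : a + b + c + d = 0) : a = 0 ∧ b = 0 ∧ c = 0 ∧ d = 0 := by
  simp only [Complex.le_def, Complex.ext_iff, Complex.add_re, Complex.add_im,
    Complex.zero_re, Complex.zero_im] at *
  refine ⟨⟨?_, ?_⟩, ⟨?_, ?_⟩, ⟨?_, ?_⟩, ⟨?_, ?_⟩⟩ <;>
    linarith [ha.1, ha.2, hb.1, hb.2, hc.1, hc.2, hd.1, hd.2, h.1, h.2]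

/-- A nonzero Hermitian potential entanglement witness (nonnegative expectation on all
product vectors) has real, strictly positive trace. -/
theorem potential_witness_trace_pos (W : Matrix (Fin 2 × Fin 2) (Fin 2 × Fin 2) ℂ)
    (hW : W.IsHermitian) (hW0 : W ≠ 0)
    (hpos : ∀ φ ψ : Fin 2 → ℂ,
      0 ≤ star (tensorVec φ ψ) ⬝ᵥ W.mulVec (tensorVec φ ψ)) :
    0 < W.trace := by
  have herm : ∀ p q : Fin 2 × Fin 2, W p q = c* (W q p) := fun p q => (hW.apply p q).symm
  have d00 : 0 ≤ W (0,0) (0,0) := by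
    have h := hpos ![1,0] ![1,0]; rw [expand] at h; simpa using h
  have d01 : 0 ≤ W (0,1) (0,1) := by
    have h := hpos ![1,0] ![0,1]; rw [expand] at h; simpa using h
  have d10 : 0 ≤ W (1,0) (1,0) := by
    have h := hpos ![0,1] ![1,0]; rw [expand] at h; simpa using h
  have d11 : 0 ≤ W (1,1) (1,1) := by
    have h := hpos ![0,1] ![0,1]; rw [expand] at h; simpa using h
  have htr : W.trace = W (0,0) (0,0) + W (0,1) (0,1) + W (1,0) (1,0) + W (1,1) (1,1) := by
    simp [Matrix.trace, Matrix.diag, Fintype.sum_prod_type, Fin.sum_univ_two]; ring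
  by_contra hlt
  have hge : 0 ≤ W.trace := by
    rw [htr]; exact add_nonneg (add_nonneg (add_nonneg d00 d01) d10) d11
  have htr0 : W (0,0) (0,0) + W (0,1) (0,1) + W (1,0) (1,0) + W (1,1) (1,1) = 0 := by
    rw [← htr]; exact ((hge.lt_or_eq).resolve_left hlt).symm
  obtain ⟨z00, z01, z10, z11⟩ := sum4_zero _ _ _ _ d00 d01 d10 d11 htr0
  -- same second coordinate
  have A : W (0,0) (1,0) = 0 := by
    apply aux_zero; intro t
    have h := hpos ![1,t] ![1,0]
    rw [expand] at h
    simp only [mul_one, mul_zero, one_mul, zero_mul, add_zero, zero_add,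
      map_zero, _root_.map_one] at h
    rw [z00, z10, herm (1,0) (0,0)] at h
    convert h using 1; ring
  have B : W (0,1) (1,1) = 0 := by
    apply aux_zero; intro t
    have h := hpos ![1,t] ![0,1]
    rw [expand] at h
    simp only [mul_one, mul_zero, one_mul, zero_mul, add_zero, zero_add,
      map_zero, _root_.map_one] at h
    rw [z01, z11, herm (1,1) (0,1)] at h
    convert h using 1; ring
  -- same first coordinate
  have C : W (0,0) (0,1) = 0 := by
    apply aux_zero; intro t
    have h := hpos ![1,0] ![1,t]
    rw [expand] at h
    simp only [mul_one, mul_zero, one_mul, zero_mul, add_zero, zero_add,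
      map_zero, _root_.map_one] at h
    rw [z00, z01, herm (0,1) (0,0)] at h
    convert h using 1; ring
  have D : W (1,0) (1,1) = 0 := by
    apply aux_zero; intro t
    have h := hpos ![0,1] ![1,t]
    rw [expand] at h
    simp only [mul_one, mul_zero, one_mul, zero_mul, add_zero, zero_add,
      map_zero, _root_.map_one] at h
    rw [z10, z11, herm (1,1) (1,0)] at h
    convert h using 1; ring
  -- cross terms
  have hs : W (0,0) (1,1) + c* (W (0,1) (1,0)) = 0 := by
    apply aux_zero; intro t
    have h := hpos ![1,1] ![1,t]
    rw [expand] at h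
    simp only [mul_one, mul_zero, one_mul, zero_mul, add_zero, zero_add,
      map_zero, _root_.map_one] at h
    rw [z00, z01, z10, z11, A, B, C, D, herm (1,0) (0,1), herm (1,1) (0,0),
      herm (0,1) (0,0), herm (1,0) (0,0), herm (1,1) (0,1), herm (1,1) (1,0)] at h
    rw [C, A, B, D] at h
    simp only [map_zero, _root_.map_one, map_add, _root_.map_mul, Complex.conj_conj] at *
    convert h using 1; ring
  have hdiff : Complex.I * (W (0,0) (1,1) - c* (W (0,1) (1,0))) = 0 := by
    apply aux_zero; intro t
    have h := hpos ![1, Complex.I] ![1,t]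
    rw [expand] at h
    simp only [mul_one, mul_zero, one_mul, zero_mul, add_zero, zero_add,
      map_zero, _root_.map_one] at h
    rw [z00, z01, z10, z11, A, B, C, D, herm (1,0) (0,1), herm (1,1) (0,0),
      herm (0,1) (0,0), herm (1,0) (0,0), herm (1,1) (0,1), herm (1,1) (1,0)] at h
    rw [C, A, B, D] at h
    simp only [map_zero, _root_.map_one, map_add, map_sub, _root_.map_mul, Complex.conj_conj, Complex.conj_I] at *
    convert h using 1; ring
  have hd' : W (0,0) (1,1) - c* (W (0,1) (1,0)) = 0 := by
    rcases mul_eq_zero.mp hdiff with h | h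
    · exact absurd h Complex.I_ne_zero
    · exact h
  have E : W (0,0) (1,1) = 0 := by
    have h2 : (2 : ℂ) * W (0,0) (1,1) = 0 := by linear_combination hs + hd'
    exact (mul_eq_zero.mp h2).resolve_left two_ne_zero
  have F : W (0,1) (1,0) = 0 := by
    have h2 : (2 : ℂ) * c* (W (0,1) (1,0)) = 0 := by linear_combination hs - hd'
    have h3 : c* (W (0,1) (1,0)) = 0 := (mul_eq_zero.mp h2).resolve_left two_ne_zero
    have h4 := congrArg c* h3
    simpa using h4
  -- conjugate entries
  have A' : W (1,0) (0,0) = 0 := by rw [herm (1,0) (0,0), A, map_zero]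
  have B' : W (1,1) (0,1) = 0 := by rw [herm (1,1) (0,1), B, map_zero]
  have C' : W (0,1) (0,0) = 0 := by rw [herm (0,1) (0,0), C, map_zero]
  have D' : W (1,1) (1,0) = 0 := by rw [herm (1,1) (1,0), D, map_zero]
  have E' : W (1,1) (0,0) = 0 := by rw [herm (1,1) (0,0), E, map_zero]
  have F' : W (1,0) (0,1) = 0 := by rw [herm (1,0) (0,1), F, map_zero]
  apply hW0
  ext ⟨i, j⟩ ⟨k, l⟩
  fin_cases i <;> fin_cases j <;> fin_cases k <;> fin_cases l <;>
    first
      | exact z00 | exact z01 | exact z10 | exact z11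
      | exact A | exact B | exact C | exact D
      | exact E | exact F | exact A' | exact B'
      | exact C' | exact D' | exact E' | exact F'
end

section
/- (SL(2,ℂ) acts as the proper orthochronous Lorentz group on Pauli coordinates) For every M ∈ SL(2,ℂ) there exists a real 4×4 matrix Λ_M such that M σ_ν M† = Σ_{μ=0}^{3} (Λ_M)_{μν} σ_μ for all ν ∈ {0,1,2,3}, and Λ_M satisfies: Λ_Mᵗ η Λ_M = η where η = diag(1,−1,−1,−1), det Λ_M = 1, and (Λ_M)₀₀ ≥ 1. Consequently, for ρ = Σ_μ r_μ σ_μ with r ∈ ℝ⁴, one has MρM† = Σ_μ r'_μ σ_μ with r' = Λ_M r real, and det(MρM†) = det ρ, i.e. the Minkowski form r₀² − r₁² − r₂² − r₃² is preserved. -/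
open Matrix

/-- The Minkowski metric `η = diag(1,-1,-1,-1)` as a real 4×4 matrix. -/
def minkowskiEta : Matrix (Fin 4) (Fin 4) ℝ :=
  Matrix.diagonal ![1, -1, -1, -1]

noncomputable def Lm (a b c d : ℂ) : Matrix (Fin 4) (Fin 4) ℂ :=
  !![(1/2)*d*(star d) + (1/2)*c*(star c) + (1/2)*b*(star b) + (1/2)*a*(star a), (-1/2)*d*(star d) + (1/2)*c*(star c) + (-1/2)*b*(star b) + (1/2)*a*(star a), (1/2)*d*(star c) + (1/2)*c*(star d) + (1/2)*b*(star a) + (1/2)*a*(star b), (1/2)*Complex.I*d*(star c) + (-1/2)*Complex.I*c*(star d) + (1/2)*Complex.I*b*(star a) + (-1/2)*Complex.I*a*(star b);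
    (-1/2)*d*(star d) + (-1/2)*c*(star c) + (1/2)*b*(star b) + (1/2)*a*(star a), (1/2)*d*(star d) + (-1/2)*c*(star c) + (-1/2)*b*(star b) + (1/2)*a*(star a), (-1/2)*d*(star c) + (-1/2)*c*(star d) + (1/2)*b*(star a) + (1/2)*a*(star b), (-1/2)*Complex.I*d*(star c) + (1/2)*Complex.I*c*(star d) + (1/2)*Complex.I*b*(star a) + (-1/2)*Complex.I*a*(star b);
    (1/2)*d*(star b) + (1/2)*c*(star a) + (1/2)*b*(star d) + (1/2)*a*(star c), (-1/2)*d*(star b) + (1/2)*c*(star a) + (-1/2)*b*(star d) + (1/2)*a*(star c), (1/2)*d*(star a) + (1/2)*c*(star b) + (1/2)*b*(star c) + (1/2)*a*(star d), (1/2)*Complex.I*d*(star a) + (-1/2)*Complex.I*c*(star b) + (1/2)*Complex.I*b*(star c) + (-1/2)*Complex.I*a*(star d);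
    (-1/2)*Complex.I*d*(star b) + (-1/2)*Complex.I*c*(star a) + (1/2)*Complex.I*b*(star d) + (1/2)*Complex.I*a*(star c), (1/2)*Complex.I*d*(star b) + (-1/2)*Complex.I*c*(star a) + (-1/2)*Complex.I*b*(star d) + (1/2)*Complex.I*a*(star c), (-1/2)*Complex.I*d*(star a) + (-1/2)*Complex.I*c*(star b) + (1/2)*Complex.I*b*(star c) + (1/2)*Complex.I*a*(star d), (1/2)*d*(star a) + (-1/2)*c*(star b) + (-1/2)*b*(star c) + (1/2)*a*(star d)]

set_option maxHeartbeats 1000000 in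
lemma Lm_real (a b c d : ℂ) (μ ν : Fin 4) : (((Lm a b c d μ ν).re : ℝ) : ℂ) = Lm a b c d μ ν := by
  rw [← Complex.conj_eq_iff_re]
  fin_cases μ <;> fin_cases ν <;>
    · simp [Lm, Complex.star_def, _root_.map_mul, map_add, map_div₀, Complex.conj_conj,
        Complex.conj_I, map_ofNat]
      ring

set_option maxHeartbeats 2000000 in
lemma Lm_expand (a b c d : ℂ) (ν : Fin 4) :
    !![a,b;c,d] * pauli ν * (!![a,b;c,d])ᴴ = ∑ μ : Fin 4, Lm a b c d μ ν • pauli μ := by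
  fin_cases ν <;> ext i j <;> fin_cases i <;> fin_cases j <;>
    · simp [Lm, pauli, Matrix.mul_apply, Fin.sum_univ_two, Fin.sum_univ_four,
        Matrix.conjTranspose_apply, Matrix.sum_apply, Complex.I_sq]
      first
      | ring1
      | (ring_nf; simp [Complex.I_sq]; try ring1)

lemma det_fin_four' {R : Type*} [CommRing R] (A : Matrix (Fin 4) (Fin 4) R) :
    A.det = A 0 0*A 1 1*A 2 2*A 3 3 - A 0 0*A 1 1*A 2 3*A 3 2 - A 0 0*A 1 2*A 2 1*A 3 3 + A 0 0*A 1 2*A 2 3*A 3 1 + A 0 0*A 1 3*A 2 1*A 3 2 - A 0 0*A 1 3*A 2 2*A 3 1 - A 0 1*A 1 0*A 2 2*A 3 3 + A 0 1*A 1 0*A 2 3*A 3 2 + A 0 1*A 1 2*A 2 0*A 3 3 - A 0 1*A 1 2*A 2 3*A 3 0 - A 0 1*A 1 3*A 2 0*A 3 2 + A 0 1*A 1 3*A 2 2*A 3 0 + A 0 2*A 1 0*A 2 1*A 3 3 - A 0 2*A 1 0*A 2 3*A 3 1 - A 0 2*A 1 1*A 2 0*A 3 3 + A 0 2*A 1 1*A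 2 3*A 3 0 + A 0 2*A 1 3*A 2 0*A 3 1 - A 0 2*A 1 3*A 2 1*A 3 0 - A 0 3*A 1 0*A 2 1*A 3 2 + A 0 3*A 1 0*A 2 2*A 3 1 + A 0 3*A 1 1*A 2 0*A 3 2 - A 0 3*A 1 1*A 2 2*A 3 0 - A 0 3*A 1 2*A 2 0*A 3 1 + A 0 3*A 1 2*A 2 1*A 3 0 := by
  rw [Matrix.det_succ_row_zero]
  simp [Fin.sum_univ_succ, Matrix.det_fin_three, Matrix.submatrix, Fin.succAbove, show (Fin.succ 2 : Fin 4) = 3 from rfl, show (Fin.castSucc 2 : Fin 4) = 2 from rfl, show (Fin.castSucc 0 : Fin 4) = 0 from rfl, show (Fin.castSucc 1 : Fin 4) = 1 from rfl, show (Fin.succ 0 : Fin 4) = 1 from rfl, show (Fin.succ 1 : Fin 4) = 2 from rfl]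
  ring

lemma I_cubed : Complex.I ^ 3 = -Complex.I := by
  rw [pow_succ, Complex.I_sq]; ring

lemma I_fourth : Complex.I ^ 4 = 1 := by
  rw [show (4:ℕ) = 2*2 from rfl, pow_mul, Complex.I_sq]; norm_num

set_option maxHeartbeats 4000000 in
lemma hdet_test (a b c d : ℂ) (hMe : a*d - b*c = 1)
    (hd' : (starRingEnd ℂ) a * (starRingEnd ℂ) d - (starRingEnd ℂ) b * (starRingEnd ℂ) c = 1) :
    (Matrix.of fun μ ν => (Lm a b c d μ ν).re).det = 1 := by
  set Λ : Matrix (Fin 4) (Fin 4) ℝ := Matrix.of fun μ ν => (Lm a b c d μ ν).re with hΛ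
  have hcast : ∀ μ ν : Fin 4, ((Λ μ ν : ℝ) : ℂ) = Lm a b c d μ ν := fun μ ν => Lm_real a b c d μ ν
  rw [det_fin_four', ← Complex.ofReal_inj]
  push_cast
  simp only [hcast]
  simp [Lm, Complex.star_def]
  linear_combination (norm := (first | ring1 | (ring_nf; simp only [Complex.I_sq, I_cubed]; try ring1))) (((starRingEnd ℂ) b)*((starRingEnd ℂ) b)*((starRingEnd ℂ) c)*((starRingEnd ℂ) c) + (-2)*((starRingEnd ℂ) a)*((starRingEnd ℂ) b)*((starRingEnd ℂ) c)*((starRingEnd ℂ) d) + ((starRingEnd ℂ) a)*((starRingEnd ℂ) a)*((starRingEnd ℂ) d)*((starRingEnd ℂ) d) + (-1)*b*c*((starRingEnd ℂ) b)*((starRingEnd ℂ) b)*((starRingEnd ℂ) c)*((starRingEnd ℂ) c) + 2*b*c*((starRingEnd ℂ) a)*((starRingEnd ℂ) b)*((starRingEnd ℂ) c)*((starRingEnd ℂ) d) + (-1)*b*c*((starRingEnd ℂ) a)*((starRingEnd ℂ) a)*((starRingEnd ℂ) d)*((starRingEnd ℂ) d) + a*d*((starRingEnd ℂ) b)*((starRingEnd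 ℂ) b)*((starRingEnd ℂ) c)*((starRingEnd ℂ) c) + (-2)*a*d*((starRingEnd ℂ) a)*((starRingEnd ℂ) b)*((starRingEnd ℂ) c)*((starRingEnd ℂ) d) + a*d*((starRingEnd ℂ) a)*((starRingEnd ℂ) a)*((starRingEnd ℂ) d)*((starRingEnd ℂ) d)) * hMe + ((1:ℂ) + (-1)*((starRingEnd ℂ) b)*((starRingEnd ℂ) c) + ((starRingEnd ℂ) a)*((starRingEnd ℂ) d)) * hd'

set_option maxHeartbeats 4000000 in
/-- `SL(2,ℂ)` acts on Pauli coordinates as a proper orthochronous Lorentz transformation,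
preserving the Minkowski form `det ρ`. -/
theorem sl2c_acts_as_lorentz (M : Matrix (Fin 2) (Fin 2) ℂ) (hM : M.det = 1) :
    ∃ Λ : Matrix (Fin 4) (Fin 4) ℝ,
      (∀ ν : Fin 4, M * pauli ν * Mᴴ = ∑ μ : Fin 4, (Λ μ ν : ℂ) • pauli μ) ∧
      Λᵀ * minkowskiEta * Λ = minkowskiEta ∧
      Λ.det = 1 ∧
      1 ≤ Λ 0 0 ∧
      (∀ r : Fin 4 → ℝ,
        M * (∑ μ : Fin 4, (r μ : ℂ) • pauli μ) * Mᴴ =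
          ∑ μ : Fin 4, ((Λ.mulVec r) μ : ℂ) • pauli μ) ∧
      (∀ r : Fin 4 → ℝ,
        (M * (∑ μ : Fin 4, (r μ : ℂ) • pauli μ) * Mᴴ).det =
          (∑ μ : Fin 4, (r μ : ℂ) • pauli μ).det) ∧
      (∀ r : Fin 4 → ℝ,
        (Λ.mulVec r 0) ^ 2 - (Λ.mulVec r 1) ^ 2 - (Λ.mulVec r 2) ^ 2 - (Λ.mulVec r 3) ^ 2 =
          (r 0) ^ 2 - (r 1) ^ 2 - (r 2) ^ 2 - (r 3) ^ 2) := by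
  obtain ⟨a, b, c, d, rfl⟩ : ∃ a b c d, M = !![a,b;c,d] := ⟨_,_,_,_, Matrix.eta_fin_two M⟩
  have hMe : a * d - b * c = 1 := by rw [Matrix.det_fin_two_of] at hM; exact hM
  have hd' : (starRingEnd ℂ) a * (starRingEnd ℂ) d - (starRingEnd ℂ) b * (starRingEnd ℂ) c = 1 := by
    have h := congrArg (starRingEnd ℂ) hMe
    simpa using h
  set Λ : Matrix (Fin 4) (Fin 4) ℝ := Matrix.of fun μ ν => (Lm a b c d μ ν).re with hΛ
  have hcast : ∀ μ ν : Fin 4, ((Λ μ ν : ℝ) : ℂ) = Lm a b c d μ ν := fun μ ν => Lm_real a b c d μ ν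
  have h1 : ∀ ν : Fin 4, !![a,b;c,d] * pauli ν * (!![a,b;c,d])ᴴ = ∑ μ : Fin 4, (Λ μ ν : ℂ) • pauli μ := by
    intro ν
    simp only [hcast]
    exact Lm_expand a b c d ν
  have hq00 : Λ 0 0 * Λ 0 0 - Λ 1 0 * Λ 1 0 - Λ 2 0 * Λ 2 0 - Λ 3 0 * Λ 3 0 = 1 := by
    rw [← Complex.ofReal_inj]
    push_cast
    simp only [hcast]
    simp [Lm, Complex.star_def]
    linear_combination (norm := (first | ring1 | (ring_nf; simp only [Complex.I_sq, I_cubed, I_fourth]; try ring1))) ((-1)*((starRingEnd ℂ) b)*((starRingEnd ℂ) c) + ((starRingEnd ℂ) a)*((starRingEnd ℂ) d)) * hMe + (1) * hd'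
  have hq01 : Λ 0 0 * Λ 0 1 - Λ 1 0 * Λ 1 1 - Λ 2 0 * Λ 2 1 - Λ 3 0 * Λ 3 1 = 0 := by
    rw [← Complex.ofReal_inj]
    push_cast
    simp only [hcast]
    simp [Lm, Complex.star_def]
    linear_combination (norm := (first | ring1 | (ring_nf; simp only [Complex.I_sq, I_cubed, I_fourth]; try ring1))) (0:ℂ) * hMe + (0:ℂ) * hd'
  have hq02 : Λ 0 0 * Λ 0 2 - Λ 1 0 * Λ 1 2 - Λ 2 0 * Λ 2 2 - Λ 3 0 * Λ 3 2 = 0 := by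
    rw [← Complex.ofReal_inj]
    push_cast
    simp only [hcast]
    simp [Lm, Complex.star_def]
    linear_combination (norm := (first | ring1 | (ring_nf; simp only [Complex.I_sq, I_cubed, I_fourth]; try ring1))) (0:ℂ) * hMe + (0:ℂ) * hd'
  have hq03 : Λ 0 0 * Λ 0 3 - Λ 1 0 * Λ 1 3 - Λ 2 0 * Λ 2 3 - Λ 3 0 * Λ 3 3 = 0 := by
    rw [← Complex.ofReal_inj]
    push_cast
    simp only [hcast]
    simp [Lm, Complex.star_def]
    linear_combination (norm := (first | ring1 | (ring_nf; simp only [Complex.I_sq, I_cubed, I_fourth]; try ring1))) (0:ℂ) * hMe + (0:ℂ) * hd'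
  have hq10 : Λ 0 1 * Λ 0 0 - Λ 1 1 * Λ 1 0 - Λ 2 1 * Λ 2 0 - Λ 3 1 * Λ 3 0 = 0 := by
    rw [← Complex.ofReal_inj]
    push_cast
    simp only [hcast]
    simp [Lm, Complex.star_def]
    linear_combination (norm := (first | ring1 | (ring_nf; simp only [Complex.I_sq, I_cubed, I_fourth]; try ring1))) (0:ℂ) * hMe + (0:ℂ) * hd'
  have hq11 : Λ 0 1 * Λ 0 1 - Λ 1 1 * Λ 1 1 - Λ 2 1 * Λ 2 1 - Λ 3 1 * Λ 3 1 = -1 := by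
    rw [← Complex.ofReal_inj]
    push_cast
    simp only [hcast]
    simp [Lm, Complex.star_def]
    linear_combination (norm := (first | ring1 | (ring_nf; simp only [Complex.I_sq, I_cubed, I_fourth]; try ring1))) (((starRingEnd ℂ) b)*((starRingEnd ℂ) c) + (-1)*((starRingEnd ℂ) a)*((starRingEnd ℂ) d)) * hMe + ((-1)) * hd'
  have hq12 : Λ 0 1 * Λ 0 2 - Λ 1 1 * Λ 1 2 - Λ 2 1 * Λ 2 2 - Λ 3 1 * Λ 3 2 = 0 := by
    rw [← Complex.ofReal_inj]
    push_cast
    simp only [hcast]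
    simp [Lm, Complex.star_def]
    linear_combination (norm := (first | ring1 | (ring_nf; simp only [Complex.I_sq, I_cubed, I_fourth]; try ring1))) (0:ℂ) * hMe + (0:ℂ) * hd'
  have hq13 : Λ 0 1 * Λ 0 3 - Λ 1 1 * Λ 1 3 - Λ 2 1 * Λ 2 3 - Λ 3 1 * Λ 3 3 = 0 := by
    rw [← Complex.ofReal_inj]
    push_cast
    simp only [hcast]
    simp [Lm, Complex.star_def]
    linear_combination (norm := (first | ring1 | (ring_nf; simp only [Complex.I_sq, I_cubed, I_fourth]; try ring1))) (0:ℂ) * hMe + (0:ℂ) * hd'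
  have hq20 : Λ 0 2 * Λ 0 0 - Λ 1 2 * Λ 1 0 - Λ 2 2 * Λ 2 0 - Λ 3 2 * Λ 3 0 = 0 := by
    rw [← Complex.ofReal_inj]
    push_cast
    simp only [hcast]
    simp [Lm, Complex.star_def]
    linear_combination (norm := (first | ring1 | (ring_nf; simp only [Complex.I_sq, I_cubed, I_fourth]; try ring1))) (0:ℂ) * hMe + (0:ℂ) * hd'
  have hq21 : Λ 0 2 * Λ 0 1 - Λ 1 2 * Λ 1 1 - Λ 2 2 * Λ 2 1 - Λ 3 2 * Λ 3 1 = 0 := by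
    rw [← Complex.ofReal_inj]
    push_cast
    simp only [hcast]
    simp [Lm, Complex.star_def]
    linear_combination (norm := (first | ring1 | (ring_nf; simp only [Complex.I_sq, I_cubed, I_fourth]; try ring1))) (0:ℂ) * hMe + (0:ℂ) * hd'
  have hq22 : Λ 0 2 * Λ 0 2 - Λ 1 2 * Λ 1 2 - Λ 2 2 * Λ 2 2 - Λ 3 2 * Λ 3 2 = -1 := by
    rw [← Complex.ofReal_inj]
    push_cast
    simp only [hcast]
    simp [Lm, Complex.star_def]
    linear_combination (norm := (first | ring1 | (ring_nf; simp only [Complex.I_sq, I_cubed, I_fourth]; try ring1))) (((starRingEnd ℂ) b)*((starRingEnd ℂ) c) + (-1)*((starRingEnd ℂ) a)*((starRingEnd ℂ) d)) * hMe + ((-1)) * hd'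
  have hq23 : Λ 0 2 * Λ 0 3 - Λ 1 2 * Λ 1 3 - Λ 2 2 * Λ 2 3 - Λ 3 2 * Λ 3 3 = 0 := by
    rw [← Complex.ofReal_inj]
    push_cast
    simp only [hcast]
    simp [Lm, Complex.star_def]
    linear_combination (norm := (first | ring1 | (ring_nf; simp only [Complex.I_sq, I_cubed, I_fourth]; try ring1))) (0:ℂ) * hMe + (0:ℂ) * hd'
  have hq30 : Λ 0 3 * Λ 0 0 - Λ 1 3 * Λ 1 0 - Λ 2 3 * Λ 2 0 - Λ 3 3 * Λ 3 0 = 0 := by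
    rw [← Complex.ofReal_inj]
    push_cast
    simp only [hcast]
    simp [Lm, Complex.star_def]
    linear_combination (norm := (first | ring1 | (ring_nf; simp only [Complex.I_sq, I_cubed, I_fourth]; try ring1))) (0:ℂ) * hMe + (0:ℂ) * hd'
  have hq31 : Λ 0 3 * Λ 0 1 - Λ 1 3 * Λ 1 1 - Λ 2 3 * Λ 2 1 - Λ 3 3 * Λ 3 1 = 0 := by
    rw [← Complex.ofReal_inj]
    push_cast
    simp only [hcast]
    simp [Lm, Complex.star_def]
    linear_combination (norm := (first | ring1 | (ring_nf; simp only [Complex.I_sq, I_cubed, I_fourth]; try ring1))) (0:ℂ) * hMe + (0:ℂ) * hd'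
  have hq32 : Λ 0 3 * Λ 0 2 - Λ 1 3 * Λ 1 2 - Λ 2 3 * Λ 2 2 - Λ 3 3 * Λ 3 2 = 0 := by
    rw [← Complex.ofReal_inj]
    push_cast
    simp only [hcast]
    simp [Lm, Complex.star_def]
    linear_combination (norm := (first | ring1 | (ring_nf; simp only [Complex.I_sq, I_cubed, I_fourth]; try ring1))) (0:ℂ) * hMe + (0:ℂ) * hd'
  have hq33 : Λ 0 3 * Λ 0 3 - Λ 1 3 * Λ 1 3 - Λ 2 3 * Λ 2 3 - Λ 3 3 * Λ 3 3 = -1 := by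
    rw [← Complex.ofReal_inj]
    push_cast
    simp only [hcast]
    simp [Lm, Complex.star_def]
    linear_combination (norm := (first | ring1 | (ring_nf; simp only [Complex.I_sq, I_cubed, I_fourth]; try ring1))) (((starRingEnd ℂ) b)*((starRingEnd ℂ) c) + (-1)*((starRingEnd ℂ) a)*((starRingEnd ℂ) d)) * hMe + ((-1)) * hd'
  have horth : Λᵀ * minkowskiEta * Λ = minkowskiEta := by
    ext i j
    fin_cases i <;> fin_cases j <;>
      · simp [Matrix.mul_apply, Matrix.transpose_apply, Fin.sum_univ_four, minkowskiEta,
          Matrix.diagonal]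
        first
        | linear_combination hq00
        | linear_combination hq01
        | linear_combination hq02
        | linear_combination hq03
        | linear_combination hq10
        | linear_combination hq11
        | linear_combination hq12
        | linear_combination hq13
        | linear_combination hq20
        | linear_combination hq21
        | linear_combination hq22
        | linear_combination hq23
        | linear_combination hq30
        | linear_combination hq31
        | linear_combination hq32
        | linear_combination hq33
  have hdet : Λ.det = 1 := hdet_test a b c d hMe hd'
  have h00 : 1 ≤ Λ 0 0 := by
    have e0 := congrArg Complex.re (hcast 0 0)
    simp only [Complex.ofReal_re] at e0
    simp [Lm, Complex.star_def, Complex.mul_re, Complex.mul_im, Complex.add_re,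
      Complex.conj_re, Complex.conj_im] at e0
    have hre := congrArg Complex.re hMe
    simp [Complex.mul_re, Complex.sub_re] at hre
    rw [e0]
    nlinarith [sq_nonneg (a.re - d.re), sq_nonneg (a.im + d.im), sq_nonneg (b.re + c.re),
      sq_nonneg (b.im - c.im)]
  refine ⟨Λ, h1, horth, hdet, h00, ?_, ?_, ?_⟩
  · intro r
    calc !![a,b;c,d] * (∑ μ : Fin 4, (r μ : ℂ) • pauli μ) * (!![a,b;c,d])ᴴ
        = ∑ ν : Fin 4, (r ν : ℂ) • (!![a,b;c,d] * pauli ν * (!![a,b;c,d])ᴴ) := by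
          rw [Finset.mul_sum, Finset.sum_mul]
          exact Finset.sum_congr rfl fun ν _ => by rw [Matrix.mul_smul, Matrix.smul_mul]
      _ = ∑ ν : Fin 4, (r ν : ℂ) • ∑ μ : Fin 4, (Λ μ ν : ℂ) • pauli μ := by
          simp only [h1]
      _ = ∑ μ : Fin 4, ((Λ.mulVec r) μ : ℂ) • pauli μ := by
          simp only [Finset.smul_sum, smul_smul]
          rw [Finset.sum_comm]
          refine Finset.sum_congr rfl fun μ _ => ?_
          rw [← Finset.sum_smul]
          congr 1
          simp only [Matrix.mulVec, dotProduct, Fin.sum_univ_four]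
          push_cast
          ring
  · intro r
    rw [Matrix.det_mul, Matrix.det_mul, Matrix.det_conjTranspose, hM]
    simp
  · intro r
    simp only [Matrix.mulVec, dotProduct, Fin.sum_univ_four]
    linear_combination (r 0 * r 0) * hq00 + (r 0 * r 1) * hq01 + (r 0 * r 2) * hq02 + (r 0 * r 3) * hq03 + (r 1 * r 0) * hq10 + (r 1 * r 1) * hq11 + (r 1 * r 2) * hq12 + (r 1 * r 3) * hq13 + (r 2 * r 0) * hq20 + (r 2 * r 1) * hq21 + (r 2 * r 2) * hq22 + (r 2 * r 3) * hq23 + (r 3 * r 0) * hq30 + (r 3 * r 1) * hq31 + (r 3 * r 2) * hq32 + (r 3 * r 3) * hq33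
end

section
/- (Octahedron of separable Bell-diagonal states) Let ρ = Σ_{μ=0}^{3} ρ_μ P_μ be a Bell-diagonal two-qubit state, i.e. ρ_μ ≥ 0 and Σ_μ ρ_μ = 1, where P_μ are the Bell projections. Then ρ is separable if and only if ρ_μ ≤ 1/2 for every μ ∈ {0,1,2,3}. -/
open Matrix
open scoped Kronecker ComplexOrder

/-- The Bell projection `P_μ = β_μ β_μ*` (outer product). -/
noncomputable def bellProj (μ : Fin 4) : Matrix (Fin 2 × Fin 2) (Fin 2 × Fin 2) ℂ :=
  Matrix.vecMulVec (bell μ) (star (bell μ))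

/-- A two-qubit state is separable if it is a convex combination of product states. -/
def IsSepState (ρ : Matrix (Fin 2 × Fin 2) (Fin 2 × Fin 2) ℂ) : Prop :=
  ∃ (N : ℕ) (p : Fin N → ℝ) (ρA ρB : Fin N → Matrix (Fin 2) (Fin 2) ℂ),
    (∀ n, 0 ≤ p n) ∧ (∑ n, p n = 1) ∧
    (∀ n, (ρA n).PosSemidef ∧ (ρA n).trace = 1) ∧
    (∀ n, (ρB n).PosSemidef ∧ (ρB n).trace = 1) ∧
    ρ = ∑ n, (p n : ℂ) • (ρA n ⊗ₖ ρB n)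

/-!
Necessity. The Bell vector `β_μ` is `vec U / √2` with `U = σ_μᵀ` unitary, so for a product of
density matrices `⟨β_μ, (A ⊗ B) β_μ⟩ = tr (U* B U Aᵀ) / 2 ≤ tr B · tr A / 2 = 1/2`. By linearity
every separable state has overlap at most `1/2` with each Bell vector, whereas the Bell vectors are
orthonormal, so the overlap of `∑ c_ν P_ν` with `β_μ` is `c_μ`.

Sufficiency. In the Pauli basis `∑ c_μ P_μ = ¼ (1 + ∑ᵢ tᵢ σᵢ ⊗ σᵢᵀ)`, and under `c_μ ≥ 0`,
`∑ c_μ = 1` the bounds `c_μ ≤ 1/2` give `∑ |tᵢ| ≤ 1`. Each vertex `¼ (1 ± σᵢ ⊗ σᵢᵀ)` of this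
octahedron is an even mixture of two products of the eigenprojections `½ (1 ± σᵢ)`, `½ (1 ± σᵢᵀ)`,
and separable states form a convex set.
-/

namespace Matrix

theorem neg_kronecker {l m n p α : Type*} [Mul α] [HasDistribNeg α] (A : Matrix l m α)
    (B : Matrix n p α) : (-A) ⊗ₖ B = -(A ⊗ₖ B) :=
  ext fun _ _ => neg_mul _ _

theorem kronecker_neg {l m n p α : Type*} [Mul α] [HasDistribNeg α] (A : Matrix l m α)
    (B : Matrix n p α) : A ⊗ₖ (-B) = -(A ⊗ₖ B) :=
  ext fun _ _ => mul_neg _ _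

variable {𝕜 : Type*} [RCLike 𝕜]

theorem PosSemidef.trace_mul_nonneg {n : Type*} [Fintype n] {P Q : Matrix n n 𝕜}
    (hP : P.PosSemidef) (hQ : Q.PosSemidef) : 0 ≤ (P * Q).trace := by
  obtain ⟨m, v, rfl⟩ := posSemidef_iff_eq_sum_vecMulVec.mp hQ
  rw [Matrix.mul_sum, trace_sum]
  refine Finset.sum_nonneg fun i _ => ?_
  rw [mul_vecMulVec, trace_vecMulVec, dotProduct_comm]
  exact hP.dotProduct_mulVec_nonneg _

theorem PosSemidef.trace_smul_one_sub {X : Matrix (Fin 2) (Fin 2) 𝕜} (hX : X.PosSemidef) :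
    (X.trace • 1 - X).PosSemidef := by
  -- in dimension two, `tr X • 1 - X` is the adjugate of `X`, a congruence transform of `Xᵀ`
  have h : X.trace • 1 - X = !![0, 1; -1, 0] * Xᵀ * (!![0, 1; -1, 0])ᴴ := by
    ext i j; fin_cases i <;> fin_cases j <;>
      simp [trace_fin_two, Matrix.mul_apply, vecMul, dotProduct]
  rw [h]
  exact hX.transpose.mul_mul_conjTranspose_same _

theorem PosSemidef.trace_mul_le_trace_mul_trace {X Y : Matrix (Fin 2) (Fin 2) 𝕜}
    (hX : X.PosSemidef) (hY : Y.PosSemidef) : (X * Y).trace ≤ X.trace * Y.trace := by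
  have := hX.trace_smul_one_sub.trace_mul_nonneg hY
  rwa [Matrix.sub_mul, trace_sub, smul_mul_assoc, Matrix.one_mul, trace_smul, smul_eq_mul,
    sub_nonneg] at this

theorem IsHermitian.posSemidef_half_one_add {n : Type*} [Fintype n] [DecidableEq n]
    {σ : Matrix n n ℂ} (hσ : σ.IsHermitian) (hσσ : σ * σ = 1) :
    ((1 / 2 : ℝ) • (1 + σ)).PosSemidef := by
  set P := (1 / 2 : ℝ) • (1 + σ)
  have hP : P = P * Pᴴ := by
    simp only [P, conjTranspose_smul, conjTranspose_add, conjTranspose_one, hσ.eq, star_trivial,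
      smul_mul_smul, Matrix.add_mul, Matrix.mul_add, Matrix.one_mul, Matrix.mul_one, hσσ]
    module
  rw [hP]
  exact posSemidef_self_mul_conjTranspose P

end Matrix

def IsDensityMatrix {n : Type*} [Fintype n] (A : Matrix n n ℂ) : Prop :=
  A.PosSemidef ∧ A.trace = 1

theorem star_vec_dotProduct_kronecker_mulVec_vec_le {U A B : Matrix (Fin 2) (Fin 2) ℂ}
    (hU : U ∈ unitaryGroup (Fin 2) ℂ) (hA : IsDensityMatrix A) (hB : IsDensityMatrix B) :
    star (vec U) ⬝ᵥ ((A ⊗ₖ B) *ᵥ vec U) ≤ 1 := by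
  have htr : (Uᴴ * B * U).trace = 1 := by
    rw [trace_mul_cycle, ← star_eq_conjTranspose, mem_unitaryGroup_iff.mp hU, Matrix.one_mul, hB.2]
  calc star (vec U) ⬝ᵥ ((A ⊗ₖ B) *ᵥ vec U) = (Uᴴ * B * U * Aᵀ).trace := by
        rw [kronecker_mulVec_vec, star_vec_dotProduct_vec, Matrix.mul_assoc, Matrix.mul_assoc,
          Matrix.mul_assoc]
    _ ≤ (Uᴴ * B * U).trace * Aᵀ.trace :=
        (hB.1.conjTranspose_mul_mul_same U).trace_mul_le_trace_mul_trace hA.1.transpose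
    _ = 1 := by rw [htr, trace_transpose, hA.2, one_mul]

theorem pauli_isHermitian (μ : Fin 4) : (pauli μ).IsHermitian := by
  ext i j; fin_cases μ <;> fin_cases i <;> fin_cases j <;> simp [pauli]

theorem pauli_mul_self (μ : Fin 4) : pauli μ * pauli μ = 1 := by
  ext i j; fin_cases μ <;> fin_cases i <;> fin_cases j <;> simp [pauli, Matrix.mul_apply]

theorem trace_pauli_succ (i : Fin 3) : (pauli i.succ).trace = 0 := by
  fin_cases i <;> simp [pauli, trace_fin_two]

theorem pauli_mem_unitaryGroup (μ : Fin 4) : pauli μ ∈ unitaryGroup (Fin 2) ℂ := by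
  rw [mem_unitaryGroup_iff, star_eq_conjTranspose, (pauli_isHermitian μ).eq, pauli_mul_self]

theorem bell_eq_smul_vec (μ : Fin 4) : bell μ = ((√2 : ℂ)⁻¹) • vec (pauli μ)ᵀ := by
  ext p; simp [bell]

theorem star_sqrt_two_inv_mul : star ((√2 : ℂ)⁻¹) * (√2 : ℂ)⁻¹ = 1 / 2 := by
  rw [Complex.star_def, map_inv₀, Complex.conj_ofReal, ← mul_inv, ← Complex.ofReal_mul,
    Real.mul_self_sqrt zero_le_two]
  norm_num

theorem bellProj_apply (μ : Fin 4) (p q : Fin 2 × Fin 2) :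
    bellProj μ p q = 1 / 2 * (pauli μ p.1 p.2 * star (pauli μ q.1 q.2)) := by
  rw [bellProj, vecMulVec_apply, bell_eq_smul_vec, Pi.star_apply, Pi.smul_apply, Pi.smul_apply,
    star_smul, smul_eq_mul, smul_eq_mul, ← star_sqrt_two_inv_mul]
  simp only [vec, transpose_apply]
  ring

theorem star_bell_dotProduct_mulVec (μ ν : Fin 4) (M : Matrix (Fin 2 × Fin 2) (Fin 2 × Fin 2) ℂ) :
    star (bell μ) ⬝ᵥ (M *ᵥ bell ν) =
      1 / 2 * (star (vec (pauli μ)ᵀ) ⬝ᵥ (M *ᵥ vec (pauli ν)ᵀ)) := by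
  rw [bell_eq_smul_vec, bell_eq_smul_vec, star_smul, mulVec_smul, smul_dotProduct,
    dotProduct_smul, smul_smul, smul_eq_mul, star_sqrt_two_inv_mul]

theorem star_bell_dotProduct_bell (μ ν : Fin 4) :
    star (bell μ) ⬝ᵥ bell ν = if μ = ν then 1 else 0 := by
  have := star_bell_dotProduct_mulVec μ ν 1
  rw [one_mulVec, one_mulVec, star_vec_dotProduct_vec] at this
  rw [this]
  fin_cases μ <;> fin_cases ν <;> simp [pauli, trace_fin_two, Matrix.mul_apply] <;> norm_num

theorem star_bell_dotProduct_kronecker_mulVec_bell_le (μ : Fin 4)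
    {A B : Matrix (Fin 2) (Fin 2) ℂ} (hA : IsDensityMatrix A) (hB : IsDensityMatrix B) :
    star (bell μ) ⬝ᵥ ((A ⊗ₖ B) *ᵥ bell μ) ≤ 1 / 2 := by
  rw [star_bell_dotProduct_mulVec]
  have := star_vec_dotProduct_kronecker_mulVec_vec_le
    (transpose_mem_unitaryGroup_iff.mpr (pauli_mem_unitaryGroup μ)) hA hB
  calc 1 / 2 * _ ≤ (1 / 2 : ℂ) * 1 := mul_le_mul_of_nonneg_left this (by positivity)
    _ = 1 / 2 := mul_one _

theorem IsSepState.star_bell_dotProduct_mulVec_bell_le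
    {ρ : Matrix (Fin 2 × Fin 2) (Fin 2 × Fin 2) ℂ} (hρ : IsSepState ρ) (μ : Fin 4) :
    star (bell μ) ⬝ᵥ (ρ *ᵥ bell μ) ≤ 1 / 2 := by
  obtain ⟨N, p, A, B, hp, hp1, hA, hB, rfl⟩ := hρ
  calc star (bell μ) ⬝ᵥ ((∑ n, (p n : ℂ) • (A n ⊗ₖ B n)) *ᵥ bell μ)
      = ∑ n, (p n : ℂ) * (star (bell μ) ⬝ᵥ ((A n ⊗ₖ B n) *ᵥ bell μ)) := by
        simp only [sum_mulVec, dotProduct_sum, smul_mulVec, dotProduct_smul, smul_eq_mul]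
    _ ≤ ∑ n, (p n : ℂ) * (1 / 2) := Finset.sum_le_sum fun n _ =>
        mul_le_mul_of_nonneg_left
          (star_bell_dotProduct_kronecker_mulVec_bell_le μ (hA n) (hB n))
          (Complex.zero_le_real.mpr (hp n))
    _ = 1 / 2 := by rw [← Finset.sum_mul, ← Complex.ofReal_sum, hp1, Complex.ofReal_one, one_mul]

theorem star_bell_dotProduct_bellProj_mulVec_bell (μ ν : Fin 4) :
    star (bell μ) ⬝ᵥ (bellProj ν *ᵥ bell μ) = if ν = μ then 1 else 0 := by
  rw [bellProj, vecMulVec_mulVec, dotProduct_smul, MulOpposite.smul_eq_mul_unop,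
    MulOpposite.unop_op, star_bell_dotProduct_bell, star_bell_dotProduct_bell]
  rcases eq_or_ne ν μ with rfl | h
  · simp
  · simp [h, h.symm]

theorem star_bell_dotProduct_sum_smul_bellProj_mulVec_bell (c : Fin 4 → ℝ) (μ : Fin 4) :
    star (bell μ) ⬝ᵥ ((∑ ν, (c ν : ℂ) • bellProj ν) *ᵥ bell μ) = c μ := by
  simp only [sum_mulVec, dotProduct_sum, smul_mulVec, dotProduct_smul, smul_eq_mul,
    star_bell_dotProduct_bellProj_mulVec_bell, mul_ite, mul_one, mul_zero, Finset.sum_ite_eq',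
    Finset.mem_univ, if_true]

theorem convex_setOf_isSepState : Convex ℝ {ρ | IsSepState ρ} := by
  rintro _ ⟨N, p, A, B, hp, hp1, hA, hB, rfl⟩ _ ⟨M, q, C, D, hq, hq1, hC, hD, rfl⟩ a b ha hb hab
  refine ⟨N + M, Fin.append (a • p) (b • q), Fin.append A C, Fin.append B D, fun n => ?_, ?_,
    fun n => ?_, fun n => ?_, ?_⟩
  · refine Fin.addCases (fun i => ?_) (fun j => ?_) n <;> simp only [Fin.append_left,
      Fin.append_right, Pi.smul_apply, smul_eq_mul]
    exacts [mul_nonneg ha (hp i), mul_nonneg hb (hq j)]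
  · simp [Fin.sum_univ_add, ← Finset.mul_sum, hp1, hq1, hab]
  · exact Fin.addCases (fun i => by simpa using hA i) (fun j => by simpa using hC j) n
  · exact Fin.addCases (fun i => by simpa using hB i) (fun j => by simpa using hD j) n
  · simp [Fin.sum_univ_add, Finset.smul_sum, smul_smul, ← Complex.coe_smul]

theorem isSepState_kronecker {A B : Matrix (Fin 2) (Fin 2) ℂ} (hA : IsDensityMatrix A)
    (hB : IsDensityMatrix B) : IsSepState (A ⊗ₖ B) :=
  ⟨1, 1, fun _ => A, fun _ => B, fun _ => zero_le_one, by simp, fun _ => hA, fun _ => hB, by simp⟩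

def IsTracelessHermitianInvolution {n : Type*} [Fintype n] [DecidableEq n]
    (σ : Matrix n n ℂ) : Prop :=
  σ.IsHermitian ∧ σ * σ = 1 ∧ σ.trace = 0

namespace IsTracelessHermitianInvolution

variable {n : Type*} [Fintype n] [DecidableEq n] {σ : Matrix n n ℂ}

theorem neg (hσ : IsTracelessHermitianInvolution σ) : IsTracelessHermitianInvolution (-σ) :=
  ⟨hσ.1.neg, by rw [neg_mul_neg, hσ.2.1], by rw [trace_neg, hσ.2.2, neg_zero]⟩

theorem transpose (hσ : IsTracelessHermitianInvolution σ) : IsTracelessHermitianInvolution σᵀ :=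
  ⟨hσ.1.transpose, by rw [← transpose_mul, hσ.2.1, transpose_one], by rw [trace_transpose, hσ.2.2]⟩

theorem isDensityMatrix_half_one_add {σ : Matrix (Fin 2) (Fin 2) ℂ}
    (hσ : IsTracelessHermitianInvolution σ) : IsDensityMatrix ((1 / 2 : ℝ) • (1 + σ)) :=
  ⟨hσ.1.posSemidef_half_one_add hσ.2.1, by simp [trace_add, hσ.2.2]⟩

theorem isSepState_quarter_one_add_kronecker {σ τ : Matrix (Fin 2) (Fin 2) ℂ}
    (hσ : IsTracelessHermitianInvolution σ) (hτ : IsTracelessHermitianInvolution τ) :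
    IsSepState ((1 / 4 : ℝ) • (1 + σ ⊗ₖ τ)) := by
  have h : (1 / 4 : ℝ) • (1 + σ ⊗ₖ τ) =
      (1 / 2 : ℝ) • (((1 / 2 : ℝ) • (1 + σ)) ⊗ₖ ((1 / 2 : ℝ) • (1 + τ))) +
      (1 / 2 : ℝ) • (((1 / 2 : ℝ) • (1 + -σ)) ⊗ₖ ((1 / 2 : ℝ) • (1 + -τ))) := by
    simp only [smul_kronecker, kronecker_smul, add_kronecker, kronecker_add, neg_kronecker,
      kronecker_neg, one_kronecker_one]
    module
  rw [h]
  exact convex_setOf_isSepState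
    (isSepState_kronecker hσ.isDensityMatrix_half_one_add hτ.isDensityMatrix_half_one_add)
    (isSepState_kronecker hσ.neg.isDensityMatrix_half_one_add hτ.neg.isDensityMatrix_half_one_add)
    (by norm_num) (by norm_num) (by norm_num)

theorem isSepState_quarter_one_add_smul_kronecker {σ τ : Matrix (Fin 2) (Fin 2) ℂ}
    (hσ : IsTracelessHermitianInvolution σ) (hτ : IsTracelessHermitianInvolution τ) {s : ℝ}
    (hs : |s| ≤ 1) : IsSepState ((1 / 4 : ℝ) • (1 + s • (σ ⊗ₖ τ))) := by
  have h : (1 / 4 : ℝ) • (1 + s • (σ ⊗ₖ τ)) =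
      ((1 + s) / 2) • ((1 / 4 : ℝ) • (1 + σ ⊗ₖ τ)) +
      ((1 - s) / 2) • ((1 / 4 : ℝ) • (1 + σ ⊗ₖ (-τ))) := by
    rw [kronecker_neg]
    module
  rw [h]
  obtain ⟨hs₁, hs₂⟩ := abs_le.mp hs
  exact convex_setOf_isSepState (isSepState_quarter_one_add_kronecker hσ hτ)
    (isSepState_quarter_one_add_kronecker hσ hτ.neg) (by linarith) (by linarith) (by ring)

end IsTracelessHermitianInvolution

theorem pauli_succ_isTracelessHermitianInvolution (i : Fin 3) :
    IsTracelessHermitianInvolution (pauli i.succ) :=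
  ⟨pauli_isHermitian _, pauli_mul_self _, trace_pauli_succ i⟩

theorem isSepState_quarter_one_add_sum_smul_pauli_kronecker {t : Fin 3 → ℝ}
    (ht : ∑ i, |t i| ≤ 1) :
    IsSepState ((1 / 4 : ℝ) • (1 + ∑ i, t i • (pauli i.succ ⊗ₖ (pauli i.succ)ᵀ))) := by
  set w : Fin 3 → ℝ := fun i => |t i| + (1 - ∑ j, |t j|) / 3
  have hw0 (i) : 0 ≤ w i := by positivity
  have hw1 : ∑ i, w i = 1 := by simp [w, Finset.sum_add_distrib]; ring
  have htw (i) : |t i| ≤ w i := by simp only [w]; linarith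
  -- the division is junk only where `w i = 0`, and then also `t i = 0`
  have hwt (i) : w i * (t i / w i) = t i :=
    mul_div_cancel_of_imp' fun h => abs_nonpos_iff.mp (h ▸ htw i)
  have h : (1 / 4 : ℝ) • (1 + ∑ i, t i • (pauli i.succ ⊗ₖ (pauli i.succ)ᵀ)) =
      ∑ i, w i • ((1 / 4 : ℝ) • (1 + (t i / w i) • (pauli i.succ ⊗ₖ (pauli i.succ)ᵀ))) := by
    simp only [smul_add, Finset.sum_add_distrib, smul_smul, ← Finset.sum_smul, ← Finset.sum_mul,
      hw1, one_mul, mul_left_comm (w _), hwt, Finset.smul_sum]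
  rw [h]
  refine convex_setOf_isSepState.sum_mem (fun i _ => hw0 i) hw1 fun i _ => ?_
  have hi := pauli_succ_isTracelessHermitianInvolution i
  refine hi.isSepState_quarter_one_add_smul_kronecker hi.transpose ?_
  rw [abs_div, abs_of_nonneg (hw0 i)]
  exact div_le_one_of_le₀ (htw i) (hw0 i)

def bellCorrelation (c : Fin 4 → ℝ) : Fin 3 → ℝ :=
  ![c 0 + c 1 - c 2 - c 3, c 0 - c 1 + c 2 - c 3, c 0 - c 1 - c 2 + c 3]

theorem sum_smul_bellProj (c : Fin 4 → ℝ) :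
    ∑ μ, (c μ : ℂ) • bellProj μ = (1 / 4 : ℝ) • ((∑ μ, c μ) • 1 +
      ∑ i, bellCorrelation c i • (pauli i.succ ⊗ₖ (pauli i.succ)ᵀ)) := by
  ext ⟨a, b⟩ ⟨a', b'⟩
  fin_cases a <;> fin_cases b <;> fin_cases a' <;> fin_cases b' <;>
    simp [bellProj_apply, bellCorrelation, pauli, Fin.sum_univ_four, Fin.sum_univ_three,
      one_apply, ← Complex.coe_smul] <;> ring

theorem sum_abs_bellCorrelation_le {c : Fin 4 → ℝ} (hpos : ∀ μ, 0 ≤ c μ) (hsum : ∑ μ, c μ = 1)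
    (hc : ∀ μ, c μ ≤ 1 / 2) : ∑ i, |bellCorrelation c i| ≤ 1 := by
  rw [Fin.sum_univ_four] at hsum
  simp only [Fin.sum_univ_three, bellCorrelation, cons_val]
  rcases abs_cases (c 0 + c 1 - c 2 - c 3) with ⟨h₁, -⟩ | ⟨h₁, -⟩ <;>
  rcases abs_cases (c 0 - c 1 + c 2 - c 3) with ⟨h₂, -⟩ | ⟨h₂, -⟩ <;>
  rcases abs_cases (c 0 - c 1 - c 2 + c 3) with ⟨h₃, -⟩ | ⟨h₃, -⟩ <;>
  linarith [hpos 0, hpos 1, hpos 2, hpos 3, hc 0, hc 1, hc 2, hc 3]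

/-- A Bell-diagonal two-qubit state `Σ ρ_μ P_μ` is separable iff all `ρ_μ ≤ 1/2`. -/
theorem bell_diagonal_separable_iff (c : Fin 4 → ℝ)
    (hpos : ∀ μ, 0 ≤ c μ) (hsum : ∑ μ, c μ = 1) :
    IsSepState (∑ μ : Fin 4, (c μ : ℂ) • bellProj μ) ↔ ∀ μ, c μ ≤ 1 / 2 := by
  refine ⟨fun hρ μ => ?_, fun hc => ?_⟩
  · have := hρ.star_bell_dotProduct_mulVec_bell_le μ
    rw [star_bell_dotProduct_sum_smul_bellProj_mulVec_bell] at this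
    exact Complex.real_le_real.mp (by push_cast; exact this)
  · rw [sum_smul_bellProj, hsum, one_smul]
    exact isSepState_quarter_one_add_sum_smul_pauli_kronecker
      (sum_abs_bellCorrelation_le hpos hsum hc)
end

section
/- (LSL invariants) For a 4×4 complex matrix A define Ã = (σ₃⊗σ₃) Aᵗ (σ₃⊗σ₃). Let M = M_A⊗M_B with M_A, M_B ∈ SL(2,ℂ), and set A^M = M† A M. Then: (i) (A^M)~ · (A^M) = M⁻¹ (Ã A) M, so the characteristic polynomial (hence the spectrum) of ÃA is invariant under the transformation A ↦ M†AM; (ii) det(A^M) = det A. -/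
open Matrix
open scoped Kronecker

/-- The antisymmetric Pauli matrix `σ₃ = [[0,-i],[i,0]]` (paper's convention). -/
noncomputable def pauli3 : Matrix (Fin 2) (Fin 2) ℂ := !![0, -Complex.I; Complex.I, 0]

/-- The tilde (spin-flip) map `Ã = (σ₃⊗σ₃) Aᵗ (σ₃⊗σ₃)` on two-qubit observables. -/
noncomputable def tildeMap (A : Matrix (Fin 2 × Fin 2) (Fin 2 × Fin 2) ℂ) :
    Matrix (Fin 2 × Fin 2) (Fin 2 × Fin 2) ℂ :=
  (pauli3 ⊗ₖ pauli3) * Aᵀ * (pauli3 ⊗ₖ pauli3)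

lemma pauli3_mul_pauli3 : pauli3 * pauli3 = 1 := by
  ext i j
  fin_cases i <;> fin_cases j <;>
    simp [pauli3, Matrix.mul_apply, Fin.sum_univ_two, Complex.I_mul_I]

lemma pauli3_conj (N : Matrix (Fin 2) (Fin 2) ℂ) (h : N.det = 1) :
    pauli3 * Nᵀ * pauli3 = N⁻¹ := by
  have hT : Nᵀ = !![N 0 0, N 1 0; N 0 1, N 1 1] := by
    ext i j; fin_cases i <;> fin_cases j <;> rfl
  rw [Matrix.inv_def, h, Matrix.adjugate_fin_two, hT, pauli3, Matrix.mul_fin_two,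
    Matrix.mul_fin_two]
  ext i j
  fin_cases i <;> fin_cases j <;> simp [Complex.I_mul_I] <;> ring_nf <;>
    simp [Complex.I_sq]

lemma conjTranspose_kronecker (P Q : Matrix (Fin 2) (Fin 2) ℂ) :
    (P ⊗ₖ Q)ᴴ = Pᴴ ⊗ₖ Qᴴ := by
  ext i j
  simp [Matrix.conjTranspose_apply]

lemma charpoly_conj {n : Type*} [Fintype n] [DecidableEq n]
    (P N : Matrix n n ℂ) (h : P.det ≠ 0) :
    (P⁻¹ * N * P).charpoly = N.charpoly := by
  have hu : IsUnit P.det := isUnit_iff_ne_zero.mpr h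
  have hPP : P * P⁻¹ = 1 := Matrix.mul_nonsing_inv P hu
  have hm : P * (P⁻¹ * N * P) = N * P := by
    rw [Matrix.mul_assoc P⁻¹ N P, ← Matrix.mul_assoc, hPP, Matrix.one_mul]
  have key : (P.map Polynomial.C) * charmatrix (P⁻¹ * N * P) =
      charmatrix N * (P.map Polynomial.C) := by
    simp only [charmatrix, Matrix.mul_sub, Matrix.sub_mul, ← RingHom.mapMatrix_apply,
      ← _root_.map_mul, hm]
    congr 1
    exact ((Matrix.scalar_commute Polynomial.X (fun r => Commute.all _ r)
      (Polynomial.C.mapMatrix P)).symm)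
  have hdet : (P.map Polynomial.C).det = Polynomial.C P.det := by
    rw [← RingHom.mapMatrix_apply, ← RingHom.map_det]
  have h2 : (P.map Polynomial.C).det * (P⁻¹ * N * P).charpoly =
      N.charpoly * (P.map Polynomial.C).det := by
    rw [Matrix.charpoly, Matrix.charpoly, ← Matrix.det_mul, ← Matrix.det_mul, key]
  have hC : (P.map Polynomial.C).det ≠ 0 := by
    rw [hdet]; exact fun hc => h (by simpa using congrArg (Polynomial.eval 0) hc)
  rw [mul_comm] at h2
  exact mul_right_cancel₀ hC h2

lemma s_conj_mul {n : Type*} [Fintype n] [DecidableEq n] (S X Y : Matrix n n ℂ)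
    (hSS : S * S = 1) : S * (X * Y)ᵀ * S = (S * Yᵀ * S) * (S * Xᵀ * S) := by
  rw [Matrix.transpose_mul]
  have : S * Yᵀ * S * (S * Xᵀ * S) = S * Yᵀ * (S * S) * (Xᵀ * S) := by
    simp only [Matrix.mul_assoc]
  rw [this, hSS, Matrix.mul_one]
  simp only [Matrix.mul_assoc]

/-- LSL invariants: under `A ↦ M†AM` with `M = M_A⊗M_B`, `M_A, M_B ∈ SL(2,ℂ)`, the
product `ÃA` undergoes a similarity transformation (so its characteristic polynomial is
invariant), and `det A` is invariant. -/
theorem lsl_invariants (A : Matrix (Fin 2 × Fin 2) (Fin 2 × Fin 2) ℂ)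
    (MA MB : Matrix (Fin 2) (Fin 2) ℂ) (hA : MA.det = 1) (hB : MB.det = 1) :
    tildeMap ((MA ⊗ₖ MB)ᴴ * A * (MA ⊗ₖ MB)) * ((MA ⊗ₖ MB)ᴴ * A * (MA ⊗ₖ MB)) =
      (MA ⊗ₖ MB)⁻¹ * (tildeMap A * A) * (MA ⊗ₖ MB) ∧
    (tildeMap ((MA ⊗ₖ MB)ᴴ * A * (MA ⊗ₖ MB)) *
        ((MA ⊗ₖ MB)ᴴ * A * (MA ⊗ₖ MB))).charpoly = (tildeMap A * A).charpoly ∧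
    ((MA ⊗ₖ MB)ᴴ * A * (MA ⊗ₖ MB)).det = A.det := by
  set S := pauli3 ⊗ₖ pauli3 with hS
  set M := MA ⊗ₖ MB with hM
  have hdetM : M.det = 1 := by
    rw [hM, Matrix.det_kronecker, hA, hB]; simp
  have hdetMH : Mᴴ.det = 1 := by
    rw [Matrix.det_conjTranspose, hdetM]; simp
  have hSS : S * S = 1 := by
    rw [hS, ← Matrix.mul_kronecker_mul, pauli3_mul_pauli3, Matrix.one_kronecker_one]
  have hconj : S * Mᵀ * S = M⁻¹ := by
    rw [hS, hM, ← Matrix.kroneckerMap_transpose, ← Matrix.mul_kronecker_mul,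
      ← Matrix.mul_kronecker_mul, pauli3_conj MA hA, pauli3_conj MB hB,
      Matrix.inv_kronecker]
  have hconjH : S * (Mᴴ)ᵀ * S = (Mᴴ)⁻¹ := by
    rw [hS, hM, conjTranspose_kronecker, ← Matrix.kroneckerMap_transpose,
      ← Matrix.mul_kronecker_mul, ← Matrix.mul_kronecker_mul,
      pauli3_conj MAᴴ (by rw [Matrix.det_conjTranspose, hA]; simp),
      pauli3_conj MBᴴ (by rw [Matrix.det_conjTranspose, hB]; simp),
      Matrix.inv_kronecker]
  have key : tildeMap (Mᴴ * A * M) * (Mᴴ * A * M) = M⁻¹ * (tildeMap A * A) * M := by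
    have expand : tildeMap (Mᴴ * A * M) = M⁻¹ * (S * Aᵀ * S) * (Mᴴ)⁻¹ := by
      unfold tildeMap
      rw [← hS, s_conj_mul S (Mᴴ * A) M hSS, s_conj_mul S Mᴴ A hSS, hconj, hconjH]
      simp only [Matrix.mul_assoc]
    rw [expand]
    have h2 : (Mᴴ)⁻¹ * (Mᴴ * A * M) = A * M := by
      rw [Matrix.mul_assoc Mᴴ A M, ← Matrix.mul_assoc, Matrix.nonsing_inv_mul _
        (by rw [hdetMH]; exact isUnit_one), Matrix.one_mul]
    calc M⁻¹ * (S * Aᵀ * S) * (Mᴴ)⁻¹ * (Mᴴ * A * M)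
        = M⁻¹ * (S * Aᵀ * S) * ((Mᴴ)⁻¹ * (Mᴴ * A * M)) := by
          simp only [Matrix.mul_assoc]
      _ = M⁻¹ * (tildeMap A * A) * M := by
          rw [h2]; unfold tildeMap; rw [← hS]; simp only [Matrix.mul_assoc]
  refine ⟨key, ?_, ?_⟩
  · rw [key]
    exact charpoly_conj M (tildeMap A * A) (by rw [hdetM]; exact one_ne_zero)
  · rw [Matrix.det_mul, Matrix.det_mul, hdetM, hdetMH, one_mul, mul_one]
end
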